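/- arXiv:2510.10578 — 5 statements merged into one kernel-verified Lean document; each statement's English description precedes it below -/
import Mathlib

section
/- Suppose ψ_j are real numbers, j ≥ 0, with ψ_j = o(j^{-1/2} (log j)^{-1}) as j → ∞. Then γ(h) := ∑_{j=0}^∞ ψ_j ψ_{j+h} satisfies γ(h) = o(1/log h) as h → ∞, and also ∑_{j=0}^∞ ψ_{j+h}² = o(1/log h). -/
/-!
Write `a j = j^(-1/2) / log j`. Since `a j ^ 2 = 1 / (j log² j)` and
`1 / ((k + 1) log² (k + 1)) ≤ 1 / log k - 1 / log (k + 1)`, the tails of `∑ a j ^ 2` are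
`O(1 / log h)`, hence the tails of `∑ ψ j ^ 2` are `o(1 / log h)`.

For `γ h`, split the series at `j = h`. Over `j < h`, `|ψ (j + h)| = o(a h)` uniformly in `j`
because `a` is eventually decreasing, while `∑_{j < h} |ψ j| = O(√h)`; the product is
`o(√h · a h) = o(1 / log h)`. The rest of the series is bounded, via `2|xy| ≤ x² + y²`,
by the tail `∑_{j ≥ h} ψ j ^ 2`.
-/

open Filter Asymptotics Finset

lemma rpow_neg_half_sq {x : ℝ} (hx : 0 ≤ x) : (x ^ (-(1 / 2 : ℝ))) ^ 2 = x⁻¹ := by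
  rw [← Real.rpow_natCast, ← Real.rpow_mul hx]
  norm_num [Real.rpow_neg_one]

lemma sqrt_mul_rpow_neg_half_mul_inv_log {x : ℝ} (hx : 0 ≤ x) :
    √x * (x ^ (-(1 / 2 : ℝ)) * (Real.log x)⁻¹) = (Real.log x)⁻¹ := by
  rcases hx.eq_or_lt with rfl | hx
  · simp
  rw [Real.sqrt_eq_rpow, ← mul_assoc, ← Real.rpow_add hx]
  norm_num

lemma antitoneOn_rpow_neg_half_mul_inv_log :
    AntitoneOn (fun j : ℕ => (j : ℝ) ^ (-(1 / 2 : ℝ)) * (Real.log j)⁻¹) (Set.Ici 2) := by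
  intro m hm n hn hmn
  simp only [Set.mem_Ici] at hm hn
  have hm' : (1 : ℝ) < m := by exact_mod_cast hm
  have hmn' : (m : ℝ) ≤ n := by exact_mod_cast hmn
  have hlog := Real.log_pos hm'
  dsimp only
  gcongr ?_ * ?_
  · exact Real.rpow_le_rpow_of_nonpos (by linarith) hmn' (by norm_num)
  · gcongr

lemma isBigO_rpow_neg_half_mul_inv_log :
    (fun j : ℕ => (j : ℝ) ^ (-(1 / 2 : ℝ)) * (Real.log j)⁻¹) =O[atTop]
      fun j : ℕ => (j : ℝ) ^ (-(1 / 2 : ℝ)) := by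
  have hlog : (fun j : ℕ => (Real.log j)⁻¹) =O[atTop] fun _ => (1 : ℝ) :=
    (tendsto_inv_atTop_zero.comp
      (Real.tendsto_log_atTop.comp tendsto_natCast_atTop_atTop)).isBigO_one ℝ
  simpa only [mul_one] using (isBigO_refl (fun j : ℕ => (j : ℝ) ^ (-(1 / 2 : ℝ))) atTop).mul hlog

lemma sum_range_rpow_neg_half_le (n : ℕ) :
    ∑ j ∈ range n, (j : ℝ) ^ (-(1 / 2 : ℝ)) ≤ 2 * √n := by
  have key : ∀ m : ℕ, ∑ j ∈ range (m + 1), (j : ℝ) ^ (-(1 / 2 : ℝ)) ≤ 2 * √m := by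
    intro m
    induction m with
    | zero => simp
    | succ m ih =>
      rw [sum_range_succ]
      have hx : 0 < √((m : ℝ) + 1) := Real.sqrt_pos.2 (by positivity)
      have hx2 := Real.sq_sqrt (by positivity : (0 : ℝ) ≤ m + 1)
      have hy2 := Real.sq_sqrt (by positivity : (0 : ℝ) ≤ m)
      have step : (((m + 1 : ℕ) : ℝ)) ^ (-(1 / 2 : ℝ)) ≤ 2 * √((m : ℝ) + 1) - 2 * √m := by
        rw [Real.rpow_neg (by positivity), ← Real.sqrt_eq_rpow, Nat.cast_succ,
          inv_le_iff_one_le_mul₀ hx]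
        nlinarith [sq_nonneg (√((m : ℝ) + 1) - √m)]
      push_cast at step ⊢
      linarith
  exact (sum_le_sum_of_subset_of_nonneg (range_subset_range.2 n.le_succ)
    fun _ _ _ => by positivity).trans (key n)

lemma log_add_one_le_two_mul_log {x : ℝ} (hx : 2 ≤ x) : Real.log (x + 1) ≤ 2 * Real.log x := by
  rw [← Real.log_rpow (by linarith)]
  exact Real.log_le_log (by linarith) (by rw [Real.rpow_two]; nlinarith)

lemma inv_mul_log_sq_le_inv_log_sub_inv_log {x : ℝ} (hx : 1 < x) :
    ((x + 1) * Real.log (x + 1) ^ 2)⁻¹ ≤ (Real.log x)⁻¹ - (Real.log (x + 1))⁻¹ := by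
  have hL : 0 < Real.log x := Real.log_pos hx
  have hLM : Real.log x ≤ Real.log (x + 1) := Real.log_le_log (by linarith) (by linarith)
  have hgap : (x + 1)⁻¹ ≤ Real.log (x + 1) - Real.log x := by
    have := Real.one_sub_inv_le_log_of_pos (show 0 < (x + 1) / x by positivity)
    rw [Real.log_div (by positivity) (by positivity), inv_div] at this
    convert this using 1
    field_simp
    ring
  rw [inv_sub_inv hL.ne' (by linarith), mul_inv, ← div_eq_mul_inv, sq]
  have hL' : 0 < Real.log (x + 1) := by linarith
  exact div_le_div₀ (by linarith) hgap (by positivity) (by gcongr)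

lemma sum_range_inv_mul_log_sq_le {m : ℕ} (hm : 2 ≤ m) (n : ℕ) :
    ∑ i ∈ range n, (((i + (m + 1) : ℕ) : ℝ) * Real.log (i + (m + 1) : ℕ) ^ 2)⁻¹ ≤
      (Real.log m)⁻¹ := by
  calc _ ≤ ∑ i ∈ range n, ((Real.log (i + m : ℕ))⁻¹ - (Real.log (i + 1 + m : ℕ))⁻¹) := by
        gcongr with i
        have hx : (1 : ℝ) < (i + m : ℕ) := by norm_cast; omega
        have e₁ : ((i + (m + 1) : ℕ) : ℝ) = (i + m : ℕ) + 1 := by push_cast; ring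
        have e₂ : ((i + 1 + m : ℕ) : ℝ) = (i + m : ℕ) + 1 := by push_cast; ring
        rw [e₁, e₂]
        exact inv_mul_log_sq_le_inv_log_sub_inv_log hx
    _ = (Real.log m)⁻¹ - (Real.log (n + m : ℕ))⁻¹ := by
        rw [sum_range_sub' fun i => (Real.log (i + m : ℕ))⁻¹, zero_add]
    _ ≤ (Real.log m)⁻¹ := sub_le_self _ (by positivity)

lemma summable_inv_mul_log_sq : Summable fun j : ℕ => ((j : ℝ) * Real.log j ^ 2)⁻¹ :=
  (summable_nat_add_iff 3).1 <|
    summable_of_sum_range_le (fun _ => by positivity) (sum_range_inv_mul_log_sq_le le_rfl)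

lemma isBigO_tsum_inv_mul_log_sq_nat_add :
    (fun h : ℕ => ∑' i : ℕ, (((i + h : ℕ) : ℝ) * Real.log (i + h : ℕ) ^ 2)⁻¹) =O[atTop]
      fun h : ℕ => (Real.log h)⁻¹ := by
  refine IsBigO.of_bound 2 ?_
  filter_upwards [eventually_ge_atTop 3] with h hh
  obtain ⟨m, rfl⟩ : ∃ m, h = m + 1 := ⟨h - 1, by omega⟩
  have hm : (2 : ℝ) ≤ m := by exact_mod_cast (by omega : 2 ≤ m)
  rw [Real.norm_of_nonneg (tsum_nonneg fun _ => by positivity),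
    Real.norm_of_nonneg (by positivity)]
  calc _ ≤ (Real.log m)⁻¹ :=
        Real.tsum_le_of_sum_range_le (fun _ => by positivity)
          (sum_range_inv_mul_log_sq_le (by exact_mod_cast hm))
    _ ≤ 2 * (Real.log (m + 1 : ℕ))⁻¹ := by
        have hlog : 0 < Real.log m := Real.log_pos (by linarith)
        have hlog' : 0 < Real.log (m + 1 : ℕ) :=
          Real.log_pos (by exact_mod_cast (by omega : 1 < m + 1))
        rw [← div_eq_mul_inv, le_div_iff₀ hlog', Nat.cast_succ,
          inv_mul_le_iff₀ hlog, mul_comm]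
        exact log_add_one_le_two_mul_log hm

namespace Asymptotics

variable {E : Type*} [SeminormedAddCommGroup E]

theorem IsLittleO.tsum_nat_add {f : ℕ → E} {g : ℕ → ℝ} (h : f =o[atTop] g) (hg : Summable g)
    (hg0 : 0 ≤ g) : (fun n => ∑' i, f (i + n)) =o[atTop] fun n => ∑' i, g (i + n) := by
  refine isLittleO_iff.2 fun ε hε => ?_
  obtain ⟨N, hN⟩ := eventually_atTop.1 (h.bound hε)
  filter_upwards [eventually_ge_atTop N] with n hn
  have hbound : ∀ i, ‖f (i + n)‖ ≤ ε * g (i + n) := fun i => by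
    simpa only [Real.norm_of_nonneg (hg0 _)] using hN (i + n) (by omega)
  have hgn : Summable fun i => ε * g (i + n) := ((summable_nat_add_iff n).2 hg).mul_left ε
  have hfn : Summable fun i => ‖f (i + n)‖ := hgn.of_nonneg_of_le (fun _ => norm_nonneg _) hbound
  calc ‖∑' i, f (i + n)‖
      ≤ ∑' i, ‖f (i + n)‖ := norm_tsum_le_tsum_norm hfn
    _ ≤ ∑' i, ε * g (i + n) := hfn.tsum_le_tsum hbound hgn
    _ = ε * ‖∑' i, g (i + n)‖ := by
        rw [tsum_mul_left, Real.norm_of_nonneg (tsum_nonneg fun _ => hg0 _)]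

theorem IsLittleO.eventually_forall_nat_add_le {f : ℕ → E} {g : ℕ → ℝ} {N : ℕ}
    (h : f =o[atTop] g) (hg : AntitoneOn g (Set.Ici N)) (hg0 : 0 ≤ g) {ε : ℝ} (hε : 0 < ε) :
    ∀ᶠ n in atTop, ∀ j, ‖f (j + n)‖ ≤ ε * g n := by
  obtain ⟨M, hM⟩ := eventually_atTop.1 (h.bound hε)
  filter_upwards [eventually_ge_atTop (max M N)] with n hn j
  calc ‖f (j + n)‖ ≤ ε * ‖g (j + n)‖ := hM _ (by omega)
    _ = ε * g (j + n) := by rw [Real.norm_of_nonneg (hg0 _)]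
    _ ≤ ε * g n := by
        gcongr
        exact hg (Set.mem_Ici.2 (by omega)) (Set.mem_Ici.2 (by omega)) (by omega)

theorem IsLittleO.sum_range_norm_isLittleO_sqrt {u : ℕ → E}
    (hu : u =o[atTop] fun j : ℕ => (j : ℝ) ^ (-(1 / 2 : ℝ))) :
    (fun n => ∑ j ∈ range n, ‖u j‖) =o[atTop] fun n : ℕ => √(n : ℝ) := by
  have hdiv : Tendsto (fun n => ∑ j ∈ range n, (j : ℝ) ^ (-(1 / 2 : ℝ))) atTop atTop :=
    (not_summable_iff_tendsto_nat_atTop_of_nonneg fun _ => by positivity).1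
      (Real.summable_nat_rpow.not.2 (by norm_num))
  refine (hu.norm_left.sum_range (fun _ => by positivity) hdiv).trans_isBigO ?_
  refine IsBigO.of_bound 2 (Eventually.of_forall fun n => ?_)
  rw [Real.norm_of_nonneg (sum_nonneg fun _ _ => by positivity),
    Real.norm_of_nonneg (Real.sqrt_nonneg _)]
  exact sum_range_rpow_neg_half_le n

end Asymptotics

theorem isLittleO_sum_range_mul_nat_add {R : Type*} [SeminormedRing R] {u v : ℕ → R}
    {p q : ℕ → ℝ} (hu : (fun n => ∑ j ∈ range n, ‖u j‖) =O[atTop] p)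
    (hv : ∀ ε > 0, ∀ᶠ n in atTop, ∀ j, ‖v (j + n)‖ ≤ ε * q n) :
    (fun n => ∑ j ∈ range n, u j * v (j + n)) =o[atTop] fun n => p n * q n := by
  refine isLittleO_iff.2 fun ε hε => ?_
  obtain ⟨C, hC, hCu⟩ := hu.exists_pos
  filter_upwards [hCu.bound, hv (ε / C) (by positivity)] with n hun hvn
  have hq : 0 ≤ q n := nonneg_of_mul_nonneg_right ((norm_nonneg _).trans (hvn 0)) (by positivity)
  calc ‖∑ j ∈ range n, u j * v (j + n)‖
      ≤ ∑ j ∈ range n, ‖u j‖ * (ε / C * q n) :=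
        norm_sum_le_of_le _ fun j _ => (norm_mul_le _ _).trans (by gcongr; exact hvn j)
    _ = ‖∑ j ∈ range n, ‖u j‖‖ * (ε / C * q n) := by
        rw [← sum_mul, Real.norm_of_nonneg (sum_nonneg fun _ _ => norm_nonneg _)]
    _ ≤ C * ‖p n‖ * (ε / C * q n) := by gcongr
    _ = ε * ‖p n * q n‖ := by
        rw [norm_mul, Real.norm_of_nonneg hq]
        field_simp

lemma isLittleO_sum_range_mul_nat_add_inv_log {ψ : ℕ → ℝ}
    (hψ : ψ =o[atTop] fun j : ℕ => (j : ℝ) ^ (-(1 / 2 : ℝ)) * (Real.log j)⁻¹) :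
    (fun h : ℕ => ∑ j ∈ range h, ψ j * ψ (j + h)) =o[atTop] fun h : ℕ => (Real.log h)⁻¹ :=
  (isLittleO_sum_range_mul_nat_add
      (hψ.trans_isBigO isBigO_rpow_neg_half_mul_inv_log).sum_range_norm_isLittleO_sqrt.isBigO
      fun _ hε => hψ.eventually_forall_nat_add_le antitoneOn_rpow_neg_half_mul_inv_log
        (fun _ => by positivity) hε).congr_right
    fun h => sqrt_mul_rpow_neg_half_mul_inv_log h.cast_nonneg

lemma abs_mul_le_add_sq_div_two (x y : ℝ) : |x * y| ≤ (x ^ 2 + y ^ 2) / 2 := by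
  rw [abs_mul]
  nlinarith [two_mul_le_add_sq |x| |y|, sq_abs x, sq_abs y]

lemma summable_mul_nat_add {u : ℕ → ℝ} (hu : Summable fun i => u i ^ 2) (k : ℕ) :
    Summable fun i => u i * u (i + k) :=
  ((hu.add ((summable_nat_add_iff k).2 hu)).div_const 2).of_norm_bounded
    fun _ => abs_mul_le_add_sq_div_two _ _

lemma abs_tsum_mul_nat_add_le {u : ℕ → ℝ} (hu : Summable fun i => u i ^ 2) (k : ℕ) :
    |∑' i, u i * u (i + k)| ≤ ∑' i, u i ^ 2 := by
  have hk : Summable fun i => u (i + k) ^ 2 := (summable_nat_add_iff k).2 hu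
  have htail : ∑' i, u (i + k) ^ 2 ≤ ∑' i, u i ^ 2 :=
    hk.tsum_le_tsum_of_inj (· + k) (add_left_injective k) (fun _ _ => sq_nonneg _)
      (fun _ => le_rfl) hu
  calc |∑' i, u i * u (i + k)|
      ≤ ∑' i, (u i ^ 2 + u (i + k) ^ 2) / 2 := by
        rw [← Real.norm_eq_abs]
        refine (norm_tsum_le_tsum_norm (summable_mul_nat_add hu k).norm).trans ?_
        exact (summable_mul_nat_add hu k).norm.tsum_le_tsum
          (fun _ => abs_mul_le_add_sq_div_two _ _) ((hu.add hk).div_const 2)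
    _ = (∑' i, u i ^ 2 + ∑' i, u (i + k) ^ 2) / 2 := by rw [tsum_div_const, hu.tsum_add hk]
    _ ≤ ∑' i, u i ^ 2 := by linarith

theorem stmt_9 (ψ : ℕ → ℝ)
    (hψ : ψ =o[atTop] fun j : ℕ => (j : ℝ) ^ (-(1 / 2 : ℝ)) * (Real.log j)⁻¹) :
    ((fun h : ℕ => ∑' j : ℕ, ψ j * ψ (j + h)) =o[atTop]
        fun h : ℕ => 1 / Real.log h) ∧
      ((fun h : ℕ => ∑' j : ℕ, ψ (j + h) ^ 2) =o[atTop]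
        fun h : ℕ => 1 / Real.log h) := by
  have hψ₂ : (fun j => ψ j ^ 2) =o[atTop] fun j : ℕ => ((j : ℝ) * Real.log j ^ 2)⁻¹ :=
    (hψ.pow two_pos).congr_right fun j => by
      rw [mul_pow, rpow_neg_half_sq j.cast_nonneg, inv_pow, mul_inv]
  have hsq : Summable fun j => ψ j ^ 2 :=
    summable_of_isBigO_nat summable_inv_mul_log_sq hψ₂.isBigO
  have htail : (fun h : ℕ => ∑' j, ψ (j + h) ^ 2) =o[atTop] fun h : ℕ => 1 / Real.log h := by
    simpa only [one_div] using
      (hψ₂.tsum_nat_add summable_inv_mul_log_sq fun _ => by positivity).trans_isBigO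
        isBigO_tsum_inv_mul_log_sq_nat_add
  have hhead :
      (fun h : ℕ => ∑ j ∈ range h, ψ j * ψ (j + h)) =o[atTop] fun h : ℕ => 1 / Real.log h := by
    simpa only [one_div] using isLittleO_sum_range_mul_nat_add_inv_log hψ
  have hrest : (fun h : ℕ => ∑' i, ψ (i + h) * ψ (i + h + h)) =O[atTop]
      fun h : ℕ => ∑' j, ψ (j + h) ^ 2 :=
    IsBigO.of_bound 1 (Eventually.of_forall fun h => by
      simpa only [one_mul, Real.norm_eq_abs] using
        (abs_tsum_mul_nat_add_le ((summable_nat_add_iff h).2 hsq) h).trans (le_abs_self _))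
  have hsplit : (fun h : ℕ => ∑' j, ψ j * ψ (j + h)) =
      fun h => ∑ j ∈ range h, ψ j * ψ (j + h) + ∑' i, ψ (i + h) * ψ (i + h + h) :=
    funext fun h => ((summable_mul_nat_add hsq h).sum_add_tsum_nat_add h).symm
  exact ⟨hsplit ▸ hhead.add (hrest.trans_isLittleO htail), htail⟩
end

section
/- Let {Y_k}_{k∈ℤ} be a stationary ℝ^d-valued process that is m-extremally-dependent, with threshold sequence u_n(τ) satisfying n P(Y_{0,i} > u_{n,i}(τ_i)) → τ_i > 0 for each i. If the limit θ_m(τ) := lim_n P(Y₁ ≤ u_n(τ), …, Y_m ≤ u_n(τ) | Y₀ ≰ u_n(τ)) exists, then θ_m(τ) ≥ 1/(m+1). -/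
open MeasureTheory Filter
open scoped ENNReal

theorem stmt_12 {Ω : Type*} [MeasurableSpace Ω] (μ : Measure Ω) [IsProbabilityMeasure μ]
    (d : ℕ) (hd : 0 < d) (Y : ℤ → Ω → Fin d → ℝ)
    (hmeas : ∀ k, Measurable (Y k))
    -- stationarity of the process
    (hstat : ∀ k : ℤ,
      Measure.map (fun ω => fun n : ℤ => Y (n + k) ω) μ =
        Measure.map (fun ω => fun n : ℤ => Y n ω) μ)
    (m : ℕ) (τ : Fin d → ℝ) (hτ : ∀ i, 0 < τ i)
    (u : ℕ → Fin d → ℝ)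
    -- marginal tail condition
    (hu : ∀ i, Tendsto (fun n : ℕ => (n : ℝ) * (μ {ω | u n i < Y 0 ω i}).toReal)
      atTop (nhds (τ i)))
    -- m-extremal-dependence along the threshold sequence
    (hmed : ∀ k l : ℤ, k ≤ 0 → (m : ℤ) + 1 ≤ l → ∀ i j : Fin d,
      Tendsto (fun n : ℕ =>
          (n : ℝ) * (μ {ω | u n i < Y k ω i ∧ u n j < Y l ω j}).toReal)
        atTop (nhds 0))
    (θ : ℝ)
    -- existence of the limit θ_m(τ)
    (hθ : Tendsto (fun n : ℕ =>
        (μ {ω | (∀ k ∈ Finset.Icc (1 : ℤ) (m : ℤ), ∀ i, Y k ω i ≤ u n i) ∧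
            ¬ (∀ i, Y 0 ω i ≤ u n i)}).toReal /
          (μ {ω | ¬ (∀ i, Y 0 ω i ≤ u n i)}).toReal)
      atTop (nhds θ)) :
    (1 : ℝ) / (m + 1) ≤ θ := by
  classical
  have him : (0:ℝ) < (m:ℝ) + 1 := by positivity
  set i0 : Fin d := ⟨0, hd⟩ with hi0
  have hτ0 := hτ i0
  -- measurability of the path map
  have hpathmeas : Measurable (fun ω => fun k : ℤ => Y k ω) :=
    measurable_pi_lambda _ (fun k => hmeas k)
  -- Step 1: stationarity shift
  have hshift : ∀ (j : ℤ) (n : ℕ),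
      μ {ω | (∀ k ∈ Finset.Icc (1 : ℤ) (m : ℤ), ∀ i, Y (k + j) ω i ≤ u n i) ∧
          ¬ (∀ i, Y (0 + j) ω i ≤ u n i)} =
      μ {ω | (∀ k ∈ Finset.Icc (1 : ℤ) (m : ℤ), ∀ i, Y k ω i ≤ u n i) ∧
          ¬ (∀ i, Y 0 ω i ≤ u n i)} := by
    intro j n
    have hle : ∀ (k : ℤ) (i : Fin d) (c : ℝ),
        MeasurableSet {f : ℤ → Fin d → ℝ | f k i ≤ c} := fun k i c =>
      measurableSet_le ((measurable_pi_apply i).comp (measurable_pi_apply k)) measurable_const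
    have hT : MeasurableSet {f : ℤ → Fin d → ℝ |
        (∀ k ∈ Finset.Icc (1 : ℤ) (m : ℤ), ∀ i, f k i ≤ u n i) ∧ ¬ (∀ i, f 0 i ≤ u n i)} := by
      have h1 : {f : ℤ → Fin d → ℝ | ∀ k ∈ Finset.Icc (1 : ℤ) (m : ℤ), ∀ i, f k i ≤ u n i}
          = ⋂ k ∈ Finset.Icc (1 : ℤ) (m : ℤ), ⋂ i, {f : ℤ → Fin d → ℝ | f k i ≤ u n i} := by
        ext f; simp
      have h2 : {f : ℤ → Fin d → ℝ | ∀ i, f 0 i ≤ u n i}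
          = ⋂ i, {f : ℤ → Fin d → ℝ | f 0 i ≤ u n i} := by ext f; simp
      have hm1 : MeasurableSet {f : ℤ → Fin d → ℝ |
          ∀ k ∈ Finset.Icc (1 : ℤ) (m : ℤ), ∀ i, f k i ≤ u n i} := by
        rw [h1]
        exact MeasurableSet.biInter (Finset.countable_toSet _)
          (fun k _ => MeasurableSet.iInter fun i => hle k i _)
      have hm2 : MeasurableSet {f : ℤ → Fin d → ℝ | ∀ i, f 0 i ≤ u n i} := by
        rw [h2]; exact MeasurableSet.iInter fun i => hle 0 i _
      exact hm1.inter hm2.compl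
    have hmj : Measurable (fun ω => fun k : ℤ => Y (k + j) ω) :=
      measurable_pi_lambda _ (fun k => hmeas (k + j))
    have e1 : {ω | (∀ k ∈ Finset.Icc (1 : ℤ) (m : ℤ), ∀ i, Y (k + j) ω i ≤ u n i) ∧
          ¬ (∀ i, Y (0 + j) ω i ≤ u n i)} = (fun ω => fun k : ℤ => Y (k + j) ω) ⁻¹'
        {f : ℤ → Fin d → ℝ |
          (∀ k ∈ Finset.Icc (1 : ℤ) (m : ℤ), ∀ i, f k i ≤ u n i) ∧ ¬ (∀ i, f 0 i ≤ u n i)} := rfl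
    have e2 : {ω | (∀ k ∈ Finset.Icc (1 : ℤ) (m : ℤ), ∀ i, Y k ω i ≤ u n i) ∧
          ¬ (∀ i, Y 0 ω i ≤ u n i)} = (fun ω => fun k : ℤ => Y k ω) ⁻¹'
        {f : ℤ → Fin d → ℝ |
          (∀ k ∈ Finset.Icc (1 : ℤ) (m : ℤ), ∀ i, f k i ≤ u n i) ∧ ¬ (∀ i, f 0 i ≤ u n i)} := rfl
    rw [e1, e2, ← Measure.map_apply hmj hT, ← Measure.map_apply hpathmeas hT, hstat j]
  -- Step 2: the last-exceedance decomposition (set inclusion)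
  have hsub : ∀ n : ℕ, {ω | ¬ (∀ i, Y 0 ω i ≤ u n i)} ⊆
      (⋃ j ∈ Finset.Icc (0:ℤ) (m:ℤ),
        {ω | (∀ k ∈ Finset.Icc (1 : ℤ) (m : ℤ), ∀ i, Y (k + j) ω i ≤ u n i) ∧
          ¬ (∀ i, Y (0 + j) ω i ≤ u n i)}) ∪
      (⋃ l ∈ Finset.Icc ((m:ℤ)+1) (2*(m:ℤ)), ⋃ i ∈ (Finset.univ : Finset (Fin d)),
        ⋃ j ∈ (Finset.univ : Finset (Fin d)), {ω | u n i < Y 0 ω i ∧ u n j < Y l ω j}) := by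
    intro n ω hω
    simp only [Set.mem_setOf_eq] at hω
    by_cases hc : ∀ l ∈ Finset.Icc ((m:ℤ)+1) (2*(m:ℤ)), ∀ j : Fin d, Y l ω j ≤ u n j
    · left
      set s : Finset ℤ :=
        (Finset.Icc (0:ℤ) (m:ℤ)).filter (fun j => ¬ (∀ i, Y j ω i ≤ u n i)) with hs_def
      have hs : s.Nonempty := by
        refine ⟨0, Finset.mem_filter.mpr ⟨Finset.mem_Icc.mpr ⟨le_refl _, ?_⟩, hω⟩⟩
        exact_mod_cast Nat.zero_le m
      set J : ℤ := s.max' hs with hJ_def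
      have hJmem : J ∈ s := s.max'_mem hs
      obtain ⟨hJIcc, hJexc⟩ := Finset.mem_filter.mp hJmem
      obtain ⟨hJ0, hJm⟩ := Finset.mem_Icc.mp hJIcc
      refine Set.mem_iUnion₂.mpr ⟨J, hJIcc, ?_⟩
      refine ⟨?_, by simpa using hJexc⟩
      intro k hk i
      obtain ⟨hk1, hk2⟩ := Finset.mem_Icc.mp hk
      by_cases hkm : k + J ≤ (m:ℤ)
      · by_contra hlt
        push_neg at hlt
        have hmem : k + J ∈ s := Finset.mem_filter.mpr
          ⟨Finset.mem_Icc.mpr ⟨by linarith, hkm⟩,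
           fun h => absurd (h i) (not_le.mpr hlt)⟩
        have := Finset.le_max' s _ hmem
        rw [← hJ_def] at this
        linarith
      · exact hc (k + J) (Finset.mem_Icc.mpr ⟨by linarith, by linarith⟩) i
    · right
      push_neg at hc hω
      obtain ⟨l, hl, j, hj⟩ := hc
      obtain ⟨i, hi⟩ := hω
      exact Set.mem_iUnion₂.mpr ⟨l, hl, Set.mem_iUnion₂.mpr ⟨i, Finset.mem_univ i,
        Set.mem_iUnion₂.mpr ⟨j, Finset.mem_univ j, ⟨hi, hj⟩⟩⟩⟩
  -- the error term
  set e : ℕ → ℝ := fun n => ∑ l ∈ Finset.Icc ((m:ℤ)+1) (2*(m:ℤ)), ∑ i : Fin d, ∑ j : Fin d,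
      (μ {ω | u n i < Y 0 ω i ∧ u n j < Y l ω j}).toReal with he_def
  have he_nonneg : ∀ n, 0 ≤ e n := by
    intro n
    rw [he_def]
    refine Finset.sum_nonneg fun l _ => Finset.sum_nonneg fun i _ => Finset.sum_nonneg
      fun j _ => ENNReal.toReal_nonneg
  -- Step 3: the measure bound
  have hbound : ∀ n : ℕ, (μ {ω | ¬ (∀ i, Y 0 ω i ≤ u n i)}).toReal ≤
      ((m:ℝ)+1) * (μ {ω | (∀ k ∈ Finset.Icc (1 : ℤ) (m : ℤ), ∀ i, Y k ω i ≤ u n i) ∧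
          ¬ (∀ i, Y 0 ω i ≤ u n i)}).toReal + e n := by
    intro n
    have hE : μ {ω | ¬ (∀ i, Y 0 ω i ≤ u n i)} ≤
        ((m+1 : ℕ) : ℝ≥0∞) * μ {ω | (∀ k ∈ Finset.Icc (1 : ℤ) (m : ℤ), ∀ i, Y k ω i ≤ u n i) ∧
          ¬ (∀ i, Y 0 ω i ≤ u n i)} +
        ∑ l ∈ Finset.Icc ((m:ℤ)+1) (2*(m:ℤ)), ∑ i : Fin d, ∑ j : Fin d,
          μ {ω | u n i < Y 0 ω i ∧ u n j < Y l ω j} := by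
      calc μ {ω | ¬ (∀ i, Y 0 ω i ≤ u n i)} ≤ _ := measure_mono (hsub n)
        _ ≤ μ (⋃ j ∈ Finset.Icc (0:ℤ) (m:ℤ),
              {ω | (∀ k ∈ Finset.Icc (1 : ℤ) (m : ℤ), ∀ i, Y (k + j) ω i ≤ u n i) ∧
                ¬ (∀ i, Y (0 + j) ω i ≤ u n i)}) +
            μ (⋃ l ∈ Finset.Icc ((m:ℤ)+1) (2*(m:ℤ)), ⋃ i ∈ (Finset.univ : Finset (Fin d)),
              ⋃ j ∈ (Finset.univ : Finset (Fin d)),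
                {ω | u n i < Y 0 ω i ∧ u n j < Y l ω j}) := measure_union_le _ _
        _ ≤ (∑ j ∈ Finset.Icc (0:ℤ) (m:ℤ),
              μ {ω | (∀ k ∈ Finset.Icc (1 : ℤ) (m : ℤ), ∀ i, Y (k + j) ω i ≤ u n i) ∧
                ¬ (∀ i, Y (0 + j) ω i ≤ u n i)}) +
            ∑ l ∈ Finset.Icc ((m:ℤ)+1) (2*(m:ℤ)), ∑ i : Fin d, ∑ j : Fin d,
              μ {ω | u n i < Y 0 ω i ∧ u n j < Y l ω j} := by
            refine add_le_add (measure_biUnion_finset_le _ _) ?_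
            refine (measure_biUnion_finset_le _ _).trans (Finset.sum_le_sum fun l _ => ?_)
            refine (measure_biUnion_finset_le _ _).trans (Finset.sum_le_sum fun i _ => ?_)
            exact measure_biUnion_finset_le _ _
        _ = _ := by
            have hcard : (Finset.Icc (0:ℤ) (m:ℤ)).card = m + 1 := by
              rw [Int.card_Icc]; omega
            rw [Finset.sum_congr rfl (fun j _ => hshift j n), Finset.sum_const, hcard,
              nsmul_eq_mul]
    have hfin : (((m+1 : ℕ) : ℝ≥0∞) * μ {ω | (∀ k ∈ Finset.Icc (1 : ℤ) (m : ℤ), ∀ i, Y k ω i ≤ u n i) ∧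
          ¬ (∀ i, Y 0 ω i ≤ u n i)} +
        ∑ l ∈ Finset.Icc ((m:ℤ)+1) (2*(m:ℤ)), ∑ i : Fin d, ∑ j : Fin d,
          μ {ω | u n i < Y 0 ω i ∧ u n j < Y l ω j}) ≠ ⊤ := by
      apply ENNReal.add_ne_top.mpr
      constructor
      · exact ENNReal.mul_ne_top (by simp) (measure_ne_top μ _)
      · refine (ENNReal.sum_lt_top.mpr fun l _ => ?_).ne
        refine ENNReal.sum_lt_top.mpr fun i _ => ?_
        exact ENNReal.sum_lt_top.mpr fun j _ => measure_lt_top μ _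
    have hR := ENNReal.toReal_mono hfin hE
    rw [ENNReal.toReal_add (ENNReal.mul_ne_top (by simp) (measure_ne_top μ _))
        (by
          refine (ENNReal.sum_lt_top.mpr fun l _ => ?_).ne
          refine ENNReal.sum_lt_top.mpr fun i _ => ?_
          exact ENNReal.sum_lt_top.mpr fun j _ => measure_lt_top μ _),
      ENNReal.toReal_mul] at hR
    have hsumeq : (∑ l ∈ Finset.Icc ((m:ℤ)+1) (2*(m:ℤ)), ∑ i : Fin d, ∑ j : Fin d,
        μ {ω | u n i < Y 0 ω i ∧ u n j < Y l ω j}).toReal = e n := by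
      rw [he_def]
      rw [ENNReal.toReal_sum (fun l _ => (ENNReal.sum_lt_top.mpr fun i _ =>
        ENNReal.sum_lt_top.mpr fun j _ => measure_lt_top μ _).ne)]
      refine Finset.sum_congr rfl fun l _ => ?_
      rw [ENNReal.toReal_sum (fun i _ => (ENNReal.sum_lt_top.mpr fun j _ =>
        measure_lt_top μ _).ne)]
      refine Finset.sum_congr rfl fun i _ => ?_
      exact ENNReal.toReal_sum fun j _ => (measure_lt_top μ _).ne
    rw [hsumeq, ENNReal.toReal_natCast] at hR
    push_cast at hR
    linarith
  -- Step 4: n * e n → 0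
  have hcn : Tendsto (fun n : ℕ => (n:ℝ) * e n) atTop (nhds 0) := by
    have heq : (fun n : ℕ => (n:ℝ) * e n) = fun n : ℕ =>
        ∑ l ∈ Finset.Icc ((m:ℤ)+1) (2*(m:ℤ)), ∑ i : Fin d, ∑ j : Fin d,
          (n:ℝ) * (μ {ω | u n i < Y 0 ω i ∧ u n j < Y l ω j}).toReal := by
      funext n
      rw [he_def]
      simp [Finset.mul_sum]
    rw [heq]
    have h := tendsto_finset_sum (Finset.Icc ((m:ℤ)+1) (2*(m:ℤ)))
      (fun l hl => tendsto_finset_sum (Finset.univ : Finset (Fin d))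
        (fun i _ => tendsto_finset_sum (Finset.univ : Finset (Fin d))
          (fun j _ => hmed 0 l le_rfl (Finset.mem_Icc.mp hl).1 i j)))
    simpa using h
  -- Step 5: lower bound on n * P(A n)
  have hna : ∀ᶠ n : ℕ in atTop, τ i0 / 2 ≤ (n:ℝ) * (μ {ω | ¬ (∀ i, Y 0 ω i ≤ u n i)}).toReal := by
    have hmono : ∀ n : ℕ, (n:ℝ) * (μ {ω | u n i0 < Y 0 ω i0}).toReal ≤
        (n:ℝ) * (μ {ω | ¬ (∀ i, Y 0 ω i ≤ u n i)}).toReal := by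
      intro n
      refine mul_le_mul_of_nonneg_left ?_ (Nat.cast_nonneg n)
      refine ENNReal.toReal_mono (measure_ne_top μ _) (measure_mono ?_)
      intro ω h hall
      exact absurd (hall i0) (not_le.mpr h)
    filter_upwards [(hu i0).eventually (eventually_ge_nhds (by linarith : τ i0 / 2 < τ i0))]
      with n hn
    exact hn.trans (hmono n)
  -- Step 6: eventual lower bound on the ratio
  have hev : (fun n : ℕ => (1 - (2/τ i0) * ((n:ℝ) * e n)) / ((m:ℝ)+1)) ≤ᶠ[atTop]
      (fun n : ℕ =>
        (μ {ω | (∀ k ∈ Finset.Icc (1 : ℤ) (m : ℤ), ∀ i, Y k ω i ≤ u n i) ∧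
            ¬ (∀ i, Y 0 ω i ≤ u n i)}).toReal /
          (μ {ω | ¬ (∀ i, Y 0 ω i ≤ u n i)}).toReal) := by
    filter_upwards [hna, eventually_ge_atTop 1] with n h1 h2
    set av : ℝ := (μ {ω | ¬ (∀ i, Y 0 ω i ≤ u n i)}).toReal with hav
    set bv : ℝ := (μ {ω | (∀ k ∈ Finset.Icc (1 : ℤ) (m : ℤ), ∀ i, Y k ω i ≤ u n i) ∧
        ¬ (∀ i, Y 0 ω i ≤ u n i)}).toReal with hbv
    have ha0 : 0 < av := by
      by_contra h
      push_neg at h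
      have hn0 : (0:ℝ) ≤ (n:ℝ) := Nat.cast_nonneg n
      nlinarith
    have hb0 := hbound n
    rw [← hav, ← hbv] at hb0
    have he0 := he_nonneg n
    have h1' : 1 ≤ (2/τ i0) * ((n:ℝ) * av) := by
      rw [div_mul_eq_mul_div, le_div_iff₀ hτ0]
      linarith
    rw [div_le_div_iff₀ him ha0]
    nlinarith [mul_le_mul_of_nonneg_left h1' he0]
  -- Step 7: conclude
  have hg : Tendsto (fun n : ℕ => (1 - (2/τ i0) * ((n:ℝ) * e n)) / ((m:ℝ)+1)) atTop
      (nhds ((1:ℝ)/((m:ℝ)+1))) := by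
    have h := ((tendsto_const_nhds : Tendsto (fun _ : ℕ => (1:ℝ)) atTop (nhds 1)).sub
      (hcn.const_mul (2/τ i0))).div_const ((m:ℝ)+1)
    simpa using h
  exact le_of_tendsto_of_tendsto hg hθ hev
end

section
/- Let {Y_k}_{k∈ℤ} be a stationary ℝ^d-valued process that is m-extremally-dependent with threshold sequence u_n(τ) as above, and suppose θ_m(τ) = lim_n P(Y₁ ≤ u_n(τ), …, Y_m ≤ u_n(τ) | Y₀ ≰ u_n(τ)) exists. Then for every ℓ > m, the limit θ_ℓ(τ) = lim_n P(Y₁ ≤ u_n(τ), …, Y_ℓ ≤ u_n(τ) | Y₀ ≰ u_n(τ)) exists and equals θ_m(τ). -/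
open MeasureTheory Filter

theorem stmt_13 {Ω : Type*} [MeasurableSpace Ω] (μ : Measure Ω) [IsProbabilityMeasure μ]
    (d : ℕ) (hd : 0 < d) (Y : ℤ → Ω → Fin d → ℝ)
    (hmeas : ∀ k, Measurable (Y k))
    -- stationarity of the process
    (hstat : ∀ k : ℤ,
      Measure.map (fun ω => fun n : ℤ => Y (n + k) ω) μ =
        Measure.map (fun ω => fun n : ℤ => Y n ω) μ)
    (m : ℕ) (τ : Fin d → ℝ) (hτ : ∀ i, 0 < τ i)
    (u : ℕ → Fin d → ℝ)
    -- marginal tail condition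
    (hu : ∀ i, Tendsto (fun n : ℕ => (n : ℝ) * (μ {ω | u n i < Y 0 ω i}).toReal)
      atTop (nhds (τ i)))
    -- m-extremal-dependence along the threshold sequence
    (hmed : ∀ k l : ℤ, k ≤ 0 → (m : ℤ) + 1 ≤ l → ∀ i j : Fin d,
      Tendsto (fun n : ℕ =>
          (n : ℝ) * (μ {ω | u n i < Y k ω i ∧ u n j < Y l ω j}).toReal)
        atTop (nhds 0))
    (θ : ℝ)
    -- existence of the limit θ_m(τ)
    (hθ : Tendsto (fun n : ℕ =>
        (μ {ω | (∀ k ∈ Finset.Icc (1 : ℤ) (m : ℤ), ∀ i, Y k ω i ≤ u n i) ∧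
            ¬ (∀ i, Y 0 ω i ≤ u n i)}).toReal /
          (μ {ω | ¬ (∀ i, Y 0 ω i ≤ u n i)}).toReal)
      atTop (nhds θ)) :
    ∀ l : ℕ, m < l →
      Tendsto (fun n : ℕ =>
          (μ {ω | (∀ k ∈ Finset.Icc (1 : ℤ) (l : ℤ), ∀ i, Y k ω i ≤ u n i) ∧
              ¬ (∀ i, Y 0 ω i ≤ u n i)}).toReal /
            (μ {ω | ¬ (∀ i, Y 0 ω i ≤ u n i)}).toReal)
        atTop (nhds θ) := by
  intro l hl
  classical
  have hYm : ∀ (k : ℤ) (i : Fin d), Measurable fun ω => Y k ω i := fun k i =>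
    (measurable_pi_apply i).comp (hmeas k)
  -- abbreviations
  let A : ℕ → Set Ω := fun n => {ω | ¬ ∀ i, Y 0 ω i ≤ u n i}
  let S : ℤ → ℕ → Set Ω := fun L n =>
    {ω | (∀ k ∈ Finset.Icc (1 : ℤ) L, ∀ i, Y k ω i ≤ u n i) ∧ ¬ ∀ i, Y 0 ω i ≤ u n i}
  let E : ℤ × Fin d × Fin d → ℕ → Set Ω := fun p n =>
    {ω | u n p.2.1 < Y 0 ω p.2.1 ∧ u n p.2.2 < Y p.1 ω p.2.2}
  let T : Finset (ℤ × Fin d × Fin d) :=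
    (Finset.Icc ((m : ℤ) + 1) (l : ℤ)) ×ˢ (Finset.univ ×ˢ Finset.univ)
  have hAmeas : ∀ n, MeasurableSet (A n) := by
    intro n
    have h1 : MeasurableSet {ω | ∀ i, Y 0 ω i ≤ u n i} := by
      have : {ω : Ω | ∀ i, Y 0 ω i ≤ u n i} = ⋂ i, {ω | Y 0 ω i ≤ u n i} := by
        ext ω; simp
      rw [this]
      exact MeasurableSet.iInter fun i => measurableSet_le (hYm 0 i) measurable_const
    have : A n = {ω | ∀ i, Y 0 ω i ≤ u n i}ᶜ := rfl
    rw [this]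
    exact h1.compl
  have hSmeas : ∀ (L : ℤ) n, MeasurableSet (S L n) := by
    intro L n
    have h1 : MeasurableSet {ω : Ω | ∀ k ∈ Finset.Icc (1 : ℤ) L, ∀ i, Y k ω i ≤ u n i} := by
      have : {ω : Ω | ∀ k ∈ Finset.Icc (1 : ℤ) L, ∀ i, Y k ω i ≤ u n i} =
          ⋂ k ∈ Finset.Icc (1 : ℤ) L, ⋂ i, {ω | Y k ω i ≤ u n i} := by
        ext ω; simp
      rw [this]
      exact MeasurableSet.biInter (Finset.Icc (1 : ℤ) L).countable_toSet fun k _ =>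
        MeasurableSet.iInter fun i => measurableSet_le (hYm k i) measurable_const
    exact h1.inter (hAmeas n)
  have hsub : ∀ n, S (l : ℤ) n ⊆ S (m : ℤ) n := by
    intro n ω hω
    refine ⟨fun k hk i => hω.1 k ?_ i, hω.2⟩
    simp only [Finset.mem_Icc] at hk ⊢
    exact ⟨hk.1, le_trans hk.2 (by exact_mod_cast hl.le)⟩
  have hdiffsub : ∀ n, S (m : ℤ) n \ S (l : ℤ) n ⊆ ⋃ p ∈ T, E p n := by
    intro n ω hω
    obtain ⟨⟨h1, h2⟩, h3⟩ := hω
    have h4 : ¬ ∀ k ∈ Finset.Icc (1 : ℤ) (l : ℤ), ∀ i, Y k ω i ≤ u n i := by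
      intro h; exact h3 ⟨h, h2⟩
    push_neg at h4
    obtain ⟨k, hk, j, hj⟩ := h4
    have h5 : ¬ ∀ i, Y 0 ω i ≤ u n i := h2
    push_neg at h5
    obtain ⟨i, hi⟩ := h5
    have hkm : (m : ℤ) + 1 ≤ k := by
      by_contra hc
      push_neg at hc
      have : k ∈ Finset.Icc (1 : ℤ) (m : ℤ) := by
        simp only [Finset.mem_Icc] at hk ⊢
        exact ⟨hk.1, by omega⟩
      exact not_lt.2 (h1 k this j) hj
    simp only [Set.mem_iUnion]
    refine ⟨(k, i, j), ?_, hi, hj⟩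
    simp only [T, Finset.mem_product, Finset.mem_Icc, Finset.mem_univ, and_true]
    exact ⟨hkm, (Finset.mem_Icc.1 hk).2⟩
  -- the difference of measures tends to zero after multiplication by n
  have hg : Tendsto (fun n : ℕ => (n : ℝ) * (μ (S (m : ℤ) n \ S (l : ℤ) n)).toReal)
      atTop (nhds 0) := by
    have hbound : ∀ n : ℕ, (n : ℝ) * (μ (S (m : ℤ) n \ S (l : ℤ) n)).toReal ≤
        ∑ p ∈ T, (n : ℝ) * (μ (E p n)).toReal := by
      intro n
      have h1 : μ (S (m : ℤ) n \ S (l : ℤ) n) ≤ ∑ p ∈ T, μ (E p n) :=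
        le_trans (measure_mono (hdiffsub n)) (measure_biUnion_finset_le T _)
      have h2 : (μ (S (m : ℤ) n \ S (l : ℤ) n)).toReal ≤ ∑ p ∈ T, (μ (E p n)).toReal := by
        rw [← ENNReal.toReal_sum (fun p _ => measure_ne_top μ _)]
        exact ENNReal.toReal_mono (ENNReal.sum_ne_top.2 fun p _ => measure_ne_top μ _) h1
      calc (n : ℝ) * (μ (S (m : ℤ) n \ S (l : ℤ) n)).toReal
          ≤ (n : ℝ) * ∑ p ∈ T, (μ (E p n)).toReal :=
            mul_le_mul_of_nonneg_left h2 (Nat.cast_nonneg n)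
        _ = ∑ p ∈ T, (n : ℝ) * (μ (E p n)).toReal := Finset.mul_sum _ _ _
    have hsum : Tendsto (fun n : ℕ => ∑ p ∈ T, (n : ℝ) * (μ (E p n)).toReal)
        atTop (nhds 0) := by
      have h := tendsto_finset_sum T (fun p hp => by
        have hp1 : (m : ℤ) + 1 ≤ p.1 := by
          simp only [T, Finset.mem_product, Finset.mem_Icc] at hp
          exact hp.1.1
        exact hmed 0 p.1 le_rfl hp1 p.2.1 p.2.2)
      simpa using h
    exact squeeze_zero (fun n => mul_nonneg (Nat.cast_nonneg n) ENNReal.toReal_nonneg)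
      hbound hsum
  -- toReal difference equals measure of set difference
  have hμdiff : ∀ n, (μ (S (m : ℤ) n)).toReal - (μ (S (l : ℤ) n)).toReal =
      (μ (S (m : ℤ) n \ S (l : ℤ) n)).toReal := by
    intro n
    rw [measure_diff (hsub n) (hSmeas _ _).nullMeasurableSet (measure_ne_top μ _),
      ENNReal.toReal_sub_of_le (measure_mono (hsub n)) (measure_ne_top μ _)]
  -- eventual lower bound on the denominator
  set i0 : Fin d := ⟨0, hd⟩ with hi0
  have hcpos : 0 < τ i0 / 2 := by linarith [hτ i0]
  have hev : ∀ᶠ n : ℕ in atTop, τ i0 / 2 ≤ (n : ℝ) * (μ (A n)).toReal := by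
    have hsubA : ∀ n, {ω | u n i0 < Y 0 ω i0} ⊆ A n := by
      intro n ω h hfor
      exact not_le.2 h (hfor i0)
    have hle : ∀ n : ℕ, (n : ℝ) * (μ {ω | u n i0 < Y 0 ω i0}).toReal ≤
        (n : ℝ) * (μ (A n)).toReal := fun n =>
      mul_le_mul_of_nonneg_left
        (ENNReal.toReal_mono (measure_ne_top μ _) (measure_mono (hsubA n)))
        (Nat.cast_nonneg n)
    have h2 : ∀ᶠ n : ℕ in atTop,
        τ i0 / 2 ≤ (n : ℝ) * (μ {ω | u n i0 < Y 0 ω i0}).toReal :=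
      (hu i0).eventually (eventually_ge_nhds (by linarith [hτ i0]))
    filter_upwards [h2] with n hn
    exact le_trans hn (hle n)
  -- the difference of the two ratios tends to zero
  have hratio0 : Tendsto (fun n : ℕ =>
      (μ (S (m : ℤ) n)).toReal / (μ (A n)).toReal -
        (μ (S (l : ℤ) n)).toReal / (μ (A n)).toReal) atTop (nhds 0) := by
    have hub : Tendsto (fun n : ℕ =>
        ((n : ℝ) * (μ (S (m : ℤ) n \ S (l : ℤ) n)).toReal) / (τ i0 / 2))
        atTop (nhds 0) := by
      simpa using hg.div_const (τ i0 / 2)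
    refine tendsto_of_tendsto_of_tendsto_of_le_of_le' tendsto_const_nhds hub ?_ ?_
    · filter_upwards [hev] with n hn
      rw [div_sub_div_same, hμdiff n]
      have ha : 0 ≤ (μ (A n)).toReal := ENNReal.toReal_nonneg
      exact div_nonneg ENNReal.toReal_nonneg ha
    · filter_upwards [hev, eventually_ge_atTop 1] with n hn hn1
      rw [div_sub_div_same, hμdiff n]
      have hnpos : (0 : ℝ) < (n : ℝ) := by exact_mod_cast hn1
      have hD : 0 ≤ (μ (S (m : ℤ) n \ S (l : ℤ) n)).toReal := ENNReal.toReal_nonneg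
      have key : (μ (S (m : ℤ) n \ S (l : ℤ) n)).toReal / (μ (A n)).toReal =
          ((n : ℝ) * (μ (S (m : ℤ) n \ S (l : ℤ) n)).toReal) /
            ((n : ℝ) * (μ (A n)).toReal) :=
        (mul_div_mul_left _ _ (ne_of_gt hnpos)).symm
      rw [key]
      exact div_le_div_of_nonneg_left (mul_nonneg hnpos.le hD) hcpos hn |>.trans_eq rfl
  -- conclude
  have hθ' : Tendsto (fun n : ℕ => (μ (S (m : ℤ) n)).toReal / (μ (A n)).toReal)
      atTop (nhds θ) := hθ
  have hfinal := hθ'.sub hratio0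
  rw [sub_zero] at hfinal
  have : Tendsto (fun n : ℕ => (μ (S (l : ℤ) n)).toReal / (μ (A n)).toReal)
      atTop (nhds θ) := by
    refine hfinal.congr fun n => by ring
  exact this
end

section
/- Let W be nonnegative with P(W > u) = u^{−α}L(u) regularly varying of index −α < 0, let a_{r,j} ≥ 0 (r ∈ ℤ, j = 1,…,d) with ∑_{r,j} a_{r,j}^{α−ε} < ∞ for some ε ∈ (0,α), and suppose W_{r,j} are identically distributed as W and pairwise extremally independent (P(a W_{r,j} > y, b W_{s,t} > y) = o(P(W>y)) as y→∞ for distinct (r,j) ≠ (s,t) and any fixed a,b > 0). Then Y := sup_{r,j} a_{r,j} W_{r,j} satisfies P(Y > y) ∼ (∑_{r,j} a_{r,j}^α) y^{−α} L(y) as y → ∞. -/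
open MeasureTheory Filter
lemma bonf {Ω ι : Type*} [MeasurableSpace Ω] [DecidableEq ι] (μ : Measure Ω) [IsFiniteMeasure μ]
    (A : ι → Set Ω) (hA : ∀ i, MeasurableSet (A i)) (s : Finset ι) :
    ∑ i ∈ s, (μ (A i)).toReal ≤ (μ (⋃ i ∈ s, A i)).toReal
      + ∑ i ∈ s, ∑ j ∈ s, (if i = j then 0 else (μ (A i ∩ A j)).toReal) := by
  classical
  induction s using Finset.induction_on with
  | empty => simp
  | @insert b s hb ih =>
    have hU : MeasurableSet (⋃ i ∈ s, A i) := MeasurableSet.biUnion s.countable_toSet (fun i _ => hA i)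
    have key : (μ (A b)).toReal + (μ (⋃ i ∈ s, A i)).toReal
        ≤ (μ (⋃ i ∈ insert b s, A i)).toReal + (μ (A b ∩ ⋃ i ∈ s, A i)).toReal := by
      have h := measure_union_add_inter (μ := μ) (A b) hU
      have := congrArg ENNReal.toReal h
      rw [ENNReal.toReal_add (measure_ne_top _ _) (measure_ne_top _ _),
        ENNReal.toReal_add (measure_ne_top _ _) (measure_ne_top _ _)] at this
      rw [Finset.set_biUnion_insert]
      linarith [this]
    have hinter : (μ (A b ∩ ⋃ i ∈ s, A i)).toReal ≤ ∑ j ∈ s, (μ (A b ∩ A j)).toReal := by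
      rw [Set.inter_iUnion₂]
      calc (μ (⋃ i ∈ s, A b ∩ A i)).toReal ≤ (∑ i ∈ s, μ (A b ∩ A i)).toReal := by
            apply ENNReal.toReal_mono
            · exact (ENNReal.sum_ne_top).2 fun i _ => measure_ne_top _ _
            · exact measure_biUnion_finset_le s _
        _ = ∑ j ∈ s, (μ (A b ∩ A j)).toReal := by
            rw [ENNReal.toReal_sum]; exact fun i _ => measure_ne_top _ _
    have hD : ∑ i ∈ insert b s, ∑ j ∈ insert b s, (if i = j then 0 else (μ (A i ∩ A j)).toReal)
        = (∑ j ∈ s, (if b = j then 0 else (μ (A b ∩ A j)).toReal))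
          + (∑ i ∈ s, (if i = b then 0 else (μ (A i ∩ A b)).toReal))
          + ∑ i ∈ s, ∑ j ∈ s, (if i = j then 0 else (μ (A i ∩ A j)).toReal) := by
      rw [Finset.sum_insert hb, Finset.sum_insert hb,
        Finset.sum_congr rfl (fun i (hi : i ∈ s) => Finset.sum_insert hb),
        Finset.sum_add_distrib]
      simp only [if_pos rfl, if_true]
      ring
    have e1 : ∑ j ∈ s, (if b = j then 0 else (μ (A b ∩ A j)).toReal) = ∑ j ∈ s, (μ (A b ∩ A j)).toReal := by
      apply Finset.sum_congr rfl; intro j hj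
      rw [if_neg (by rintro rfl; exact hb hj)]
    have e2 : 0 ≤ ∑ i ∈ s, (if i = b then 0 else (μ (A i ∩ A b)).toReal) := by
      apply Finset.sum_nonneg; intro i hi; split <;> positivity
    rw [Finset.sum_insert hb, hD, e1]
    linarith [ih]
lemma potter (T : ℝ → ℝ) (γ : ℝ) (hγ : 0 < γ)
    (hmono : ∀ u v : ℝ, 0 < u → u ≤ v → T v ≤ T u)
    (hev : ∀ᶠ y in atTop, T (2*y) ≤ 2^(-γ) * T y ∧ 0 ≤ T y) :
    ∃ y0 : ℝ, 1 ≤ y0 ∧ ∀ y, y0 ≤ y → ∀ l : ℝ, 1 ≤ l →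
      T (l*y) ≤ 2^γ * l^(-γ) * T y := by
  obtain ⟨y0', hy0'⟩ := eventually_atTop.1 hev
  set y0 : ℝ := max y0' 1 with hy0def
  refine ⟨y0, le_max_right _ _, ?_⟩
  have hy0P : ∀ y, y0 ≤ y → T (2*y) ≤ 2^(-γ) * T y ∧ 0 ≤ T y :=
    fun y hy => hy0' y (le_trans (le_max_left _ _) hy)
  have claim : ∀ k : ℕ, ∀ y, y0 ≤ y → T ((2:ℝ)^k * y) ≤ ((2:ℝ)^(-γ))^k * T y := by
    intro k
    induction k with
    | zero => intro y hy; simp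
    | succ k ih =>
      intro y hy
      have hy1 : (1:ℝ) ≤ y := le_trans (le_max_right _ _) hy
      have h2k : (1:ℝ) ≤ (2:ℝ)^k := one_le_pow₀ (by norm_num)
      have hyy : y0 ≤ (2:ℝ)^k * y := le_trans hy (le_mul_of_one_le_left (by linarith) h2k)
      have e : (2:ℝ)^(k+1) * y = 2 * ((2:ℝ)^k * y) := by ring
      rw [e]
      calc T (2 * ((2:ℝ)^k * y)) ≤ 2^(-γ) * T ((2:ℝ)^k * y) := (hy0P _ hyy).1
        _ ≤ 2^(-γ) * (((2:ℝ)^(-γ))^k * T y) := by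
            apply mul_le_mul_of_nonneg_left (ih y hy) (Real.rpow_nonneg (by norm_num) _)
        _ = ((2:ℝ)^(-γ))^(k+1) * T y := by ring
  intro y hy l hl
  set k : ℕ := ⌊Real.logb 2 l⌋₊ with hk
  have hl0 : (0:ℝ) < l := lt_of_lt_of_le one_pos hl
  have hlogb : 0 ≤ Real.logb 2 l := Real.logb_nonneg one_lt_two hl
  have h1 : (2:ℝ)^k ≤ l := by
    have : (2:ℝ)^(k:ℝ) ≤ 2^(Real.logb 2 l) :=
      Real.rpow_le_rpow_of_exponent_le one_le_two (Nat.floor_le hlogb)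
    rwa [Real.rpow_natCast, Real.rpow_logb two_pos (by norm_num) hl0] at this
  have h2 : l < 2 * (2:ℝ)^k := by
    have : (2:ℝ)^(Real.logb 2 l) < 2^((k:ℝ)+1) :=
      Real.rpow_lt_rpow_of_exponent_lt one_lt_two (Nat.lt_floor_add_one _)
    rw [Real.rpow_logb two_pos (by norm_num) hl0] at this
    calc l < 2^((k:ℝ)+1) := this
      _ = 2 * (2:ℝ)^k := by
        rw [Real.rpow_add two_pos, Real.rpow_natCast, Real.rpow_one]; ring
  have hy1 : (1:ℝ) ≤ y := le_trans (le_max_right _ _) hy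
  have hT1 : T (l*y) ≤ T ((2:ℝ)^k * y) := by
    apply hmono _ _ (by positivity) (by nlinarith)
  have hT2 := claim k y hy
  have hTy0 : 0 ≤ T y := (hy0P y hy).2
  have hpow : ((2:ℝ)^(-γ))^k ≤ 2^γ * l^(-γ) := by
    have e1 : ((2:ℝ)^(-γ))^k = ((2:ℝ)^k : ℝ)^(-γ) := by
      rw [← Real.rpow_natCast ((2:ℝ)^(-γ)) k, ← Real.rpow_mul (by norm_num),
        ← Real.rpow_natCast (2:ℝ) k, ← Real.rpow_mul (by norm_num)]
      ring_nf
    rw [e1]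
    have hbase : l/2 ≤ (2:ℝ)^k := by linarith
    have : ((2:ℝ)^k : ℝ)^(-γ) ≤ (l/2)^(-γ) :=
      Real.rpow_le_rpow_of_nonpos (by positivity) hbase (by linarith)
    calc ((2:ℝ)^k : ℝ)^(-γ) ≤ (l/2)^(-γ) := this
      _ = 2^γ * l^(-γ) := by
        rw [Real.div_rpow hl0.le (by norm_num), Real.rpow_neg (by norm_num : (0:ℝ) ≤ 2)]
        field_simp
  calc T (l*y) ≤ ((2:ℝ)^(-γ))^k * T y := le_trans hT1 hT2
    _ ≤ 2^γ * l^(-γ) * T y := mul_le_mul_of_nonneg_right hpow hTy0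

theorem stmt_17 {Ω : Type*} [MeasurableSpace Ω] (μ : Measure Ω) [IsProbabilityMeasure μ]
    (d : ℕ) (hd : 0 < d) (α ε : ℝ) (hα : 0 < α) (hε : 0 < ε) (hεα : ε < α)
    (L : ℝ → ℝ)
    -- `L` is slowly varying at infinity
    (hLslow : ∀ c : ℝ, 0 < c →
      Tendsto (fun u : ℝ => L (c * u) / L u) atTop (nhds 1))
    (W : ℤ × Fin d → Ω → ℝ) (hWmeas : ∀ p, Measurable (W p))
    (hWpos : ∀ p ω, 0 ≤ W p ω)
    -- each `W p` is distributed as `W` with regularly varying tail `u^{-α} L(u)`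
    (hWtail : ∀ p, ∀ u : ℝ, 0 < u → (μ {ω | u < W p ω}).toReal = u ^ (-α) * L u)
    -- pairwise extremal independence
    (hext : ∀ p q : ℤ × Fin d, p ≠ q → ∀ a b : ℝ, 0 < a → 0 < b →
      Tendsto (fun y : ℝ =>
          (μ {ω | y < a * W p ω ∧ y < b * W q ω}).toReal / (y ^ (-α) * L y))
        atTop (nhds 0))
    (a : ℤ × Fin d → ℝ) (ha : ∀ p, 0 ≤ a p)
    (hsum : Summable (fun p => a p ^ (α - ε))) :
    Tendsto (fun y : ℝ =>
        (μ {ω | y < ⨆ p, a p * W p ω}).toReal / (y ^ (-α) * L y))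
      atTop (nhds (∑' p, a p ^ α)) := by
  classical
  have p0 : ℤ × Fin d := (0, ⟨0, hd⟩)
  set T : ℝ → ℝ := fun u => u ^ (-α) * L u with hTdef
  set γ : ℝ := α - ε with hγdef
  have hγ : 0 < γ := by simp [hγdef]; linarith
  -- basic facts about T
  have hTnn : ∀ u : ℝ, 0 < u → 0 ≤ T u := by
    intro u hu; rw [hTdef]; simp only; rw [← hWtail p0 u hu]; exact ENNReal.toReal_nonneg
  have hTmono : ∀ u v : ℝ, 0 < u → u ≤ v → T v ≤ T u := by
    intro u v hu huv
    rw [hTdef]; simp only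
    rw [← hWtail p0 u hu, ← hWtail p0 v (lt_of_lt_of_le hu huv)]
    exact ENNReal.toReal_mono (measure_ne_top _ _)
      (measure_mono (fun ω h => lt_of_le_of_lt huv h))
  have hLne : ∀ᶠ y in atTop, L y ≠ 0 := by
    have h1 := hLslow 1 one_pos
    filter_upwards [h1.eventually_ne one_ne_zero] with y hy h0
    apply hy; rw [h0]; simp
  have hTpos : ∀ᶠ y in atTop, 0 < T y := by
    filter_upwards [hLne, eventually_gt_atTop 0] with y h1 h2
    refine lt_of_le_of_ne (hTnn y h2) (Ne.symm ?_)
    rw [hTdef]; simp only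
    exact mul_ne_zero (ne_of_gt (Real.rpow_pos_of_pos h2 _)) h1
  -- ratio limit
  have hratio : ∀ c : ℝ, 0 < c →
      Tendsto (fun y => T (c*y) / T y) atTop (nhds (c ^ (-α))) := by
    intro c hc
    have h := (hLslow c hc).const_mul (c ^ (-α))
    rw [mul_one] at h
    apply h.congr'
    filter_upwards [hLne, eventually_gt_atTop 0] with y h1 h2
    show c ^ (-α) * (L (c*y) / L y) = T (c*y) / T y
    rw [hTdef]; simp only
    rw [Real.mul_rpow hc.le h2.le]
    have hy : y ^ (-α) ≠ 0 := ne_of_gt (Real.rpow_pos_of_pos h2 _)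
    field_simp
  -- tail identity
  have htp : ∀ p : ℤ × Fin d, 0 < a p → ∀ y : ℝ, 0 < y →
      (μ {ω | y < a p * W p ω}).toReal = T ((a p)⁻¹ * y) := by
    intro p hp y hy
    have hset : {ω | y < a p * W p ω} = {ω | (a p)⁻¹ * y < W p ω} := by
      ext ω; simp only [Set.mem_setOf_eq]
      rw [inv_mul_lt_iff₀ hp]
    rw [hset, hWtail p _ (by positivity)]
  -- zero-coefficient tails vanish
  have htp0 : ∀ p : ℤ × Fin d, a p = 0 → ∀ y : ℝ, 0 < y →
      (μ {ω | y < a p * W p ω}).toReal = 0 := by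
    intro p hp y hy
    have : {ω | y < a p * W p ω} = (∅ : Set Ω) := by
      ext ω; simp [hp]; linarith
    rw [this]; simp
  -- inverse rpow computation
  have hinvpow : ∀ x : ℝ, 0 ≤ x → ∀ s : ℝ, (x⁻¹) ^ (-s) = x ^ s := by
    intro x hx s
    rw [Real.inv_rpow hx, Real.rpow_neg hx, inv_inv]
  -- single-term limits
  have hsingle : ∀ p : ℤ × Fin d, Tendsto
      (fun y : ℝ => (μ {ω | y < a p * W p ω}).toReal / T y) atTop (nhds ((a p) ^ α)) := by
    intro p
    rcases eq_or_lt_of_le (ha p) with hp | hp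
    · have : (a p : ℝ) ^ α = 0 := by rw [← hp, Real.zero_rpow (ne_of_gt hα)]
      rw [this]
      apply Tendsto.congr' _ (tendsto_const_nhds (x := (0:ℝ)))
      filter_upwards [eventually_gt_atTop 0] with y hy
      rw [htp0 p hp.symm y hy, zero_div]
    · have h := hratio (a p)⁻¹ (by positivity)
      rw [hinvpow (a p) (ha p) α] at h
      apply h.congr'
      filter_upwards [eventually_gt_atTop 0] with y hy
      rw [htp p hp y hy]
  -- Potter bound
  have hevp : ∀ᶠ y in atTop, T (2*y) ≤ 2 ^ (-γ) * T y ∧ 0 ≤ T y := by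
    have h2 := hratio 2 two_pos
    have hlt : (2:ℝ) ^ (-α) < 2 ^ (-γ) := by
      apply Real.rpow_lt_rpow_of_exponent_lt one_lt_two
      simp [hγdef]; linarith
    filter_upwards [h2.eventually (gt_mem_nhds hlt), hTpos, eventually_gt_atTop 0]
      with y hy hTy hy0
    refine ⟨?_, hTnn y hy0⟩
    rw [div_lt_iff₀ hTy] at hy
    linarith
  obtain ⟨y0, hy01, hy0⟩ := potter T γ hγ hTmono hevp
  have hy0pos : (0:ℝ) < y0 := lt_of_lt_of_le one_pos hy01
  -- uniform bound M on the coefficients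
  set K : ℝ := ∑' p, a p ^ γ with hKdef
  have hK : ∀ p, a p ^ γ ≤ K := fun p => Summable.le_tsum hsum p (fun q _ => Real.rpow_nonneg (ha q) _)
  set M : ℝ := K ^ γ⁻¹ + 1 with hMdef
  have hM0 : 0 < M := by
    have : 0 ≤ K ^ γ⁻¹ := Real.rpow_nonneg (le_trans (Real.rpow_nonneg (ha p0) _) (hK p0)) _
    rw [hMdef]; linarith
  have haM : ∀ p, a p < M := by
    intro p
    have h1 : a p = (a p ^ γ) ^ γ⁻¹ := by
      rw [← Real.rpow_mul (ha p), mul_inv_cancel₀ (ne_of_gt hγ), Real.rpow_one]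
    have h2 : (a p ^ γ) ^ γ⁻¹ ≤ K ^ γ⁻¹ :=
      Real.rpow_le_rpow (Real.rpow_nonneg (ha p) _) (hK p) (by positivity)
    rw [hMdef]; linarith
  -- domination constant
  set C0 : ℝ := 2 ^ γ + (M ^ α + 1) with hC0def
  have hMα : (0:ℝ) < M ^ α + 1 := by positivity
  have hMev : ∀ᶠ y in atTop, T (M⁻¹ * y) / T y < M ^ α + 1 := by
    have h := hratio M⁻¹ (by positivity)
    rw [hinvpow M hM0.le α] at h
    exact h.eventually (gt_mem_nhds (by linarith))
  have hdom : ∀ᶠ y in atTop, ∀ p : ℤ × Fin d,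
      (μ {ω | y < a p * W p ω}).toReal / T y ≤ C0 * a p ^ γ := by
    filter_upwards [eventually_ge_atTop y0, hTpos, hMev, eventually_gt_atTop 0]
      with y hyy0 hTy hMy hy0' p
    rcases eq_or_lt_of_le (ha p) with hp | hp
    · have h0 : a p = 0 := hp.symm
      rw [htp0 p h0 y hy0', zero_div, h0, Real.zero_rpow (ne_of_gt hγ), mul_zero]
    · rw [htp p hp y hy0']
      have hγnn : 0 ≤ a p ^ γ := Real.rpow_nonneg (ha p) _
      rcases le_or_gt (a p) 1 with h1 | h1
      · have hl : (1:ℝ) ≤ (a p)⁻¹ := (one_le_inv₀ hp).2 h1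
        have := hy0 y hyy0 (a p)⁻¹ hl
        rw [hinvpow (a p) (ha p) γ] at this
        rw [div_le_iff₀ hTy]
        calc T ((a p)⁻¹ * y) ≤ 2 ^ γ * a p ^ γ * T y := this
          _ ≤ C0 * a p ^ γ * T y := by
              have h6 : (2:ℝ) ^ γ ≤ C0 := by rw [hC0def]; linarith
              exact mul_le_mul_of_nonneg_right
                (mul_le_mul_of_nonneg_right h6 hγnn) hTy.le
      · have hTle : T ((a p)⁻¹ * y) ≤ T (M⁻¹ * y) := by
          apply hTmono _ _ (by positivity)
          have : M⁻¹ ≤ (a p)⁻¹ := by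
            apply inv_anti₀ hp (haM p).le
          nlinarith [hy0'.le]
        have h2 : T (M⁻¹ * y) ≤ (M ^ α + 1) * T y := by
          rw [div_lt_iff₀ hTy] at hMy; linarith
        have h3 : (1:ℝ) ≤ a p ^ γ := by
          have := Real.rpow_le_rpow (by norm_num : (0:ℝ) ≤ 1) h1.le hγ.le
          rwa [Real.one_rpow] at this
        rw [div_le_iff₀ hTy]
        calc T ((a p)⁻¹ * y) ≤ (M ^ α + 1) * T y := le_trans hTle h2
          _ ≤ C0 * a p ^ γ * T y := by
              have h4 : (M ^ α + 1) ≤ C0 * a p ^ γ := by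
                have h5 : (0:ℝ) ≤ 2 ^ γ := Real.rpow_nonneg (by norm_num) _
                have h7 := mul_le_mul_of_nonneg_left h3 hMα.le
                have h8 : 0 ≤ 2 ^ γ * a p ^ γ := mul_nonneg h5 hγnn
                rw [hC0def]; nlinarith
              exact mul_le_mul_of_nonneg_right h4 hTy.le
  -- summability of a^α
  have haα : ∀ p : ℤ × Fin d, a p ^ α ≤ a p ^ γ * M ^ ε := by
    intro p
    rcases eq_or_lt_of_le (ha p) with hp | hp
    · rw [← hp, Real.zero_rpow (ne_of_gt hα), Real.zero_rpow (ne_of_gt hγ), zero_mul]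
    · have : a p ^ α = a p ^ γ * a p ^ ε := by
        rw [← Real.rpow_add hp]; congr 1; rw [hγdef]; ring
      rw [this]
      exact mul_le_mul_of_nonneg_left
        (Real.rpow_le_rpow (ha p) (haM p).le hε.le) (Real.rpow_nonneg (ha p) _)
  have hsumα : Summable (fun p : ℤ × Fin d => a p ^ α) := by
    apply Summable.of_nonneg_of_le (fun p => Real.rpow_nonneg (ha p) _) haα
    exact hsum.mul_right _
  -- the tsum limit (dominated convergence)
  have hupperlim : Tendsto
      (fun y : ℝ => ∑' p : ℤ × Fin d, (μ {ω | y < a p * W p ω}).toReal / T y)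
      atTop (nhds (∑' p : ℤ × Fin d, a p ^ α)) := by
    apply tendsto_tsum_of_dominated_convergence (bound := fun p => C0 * a p ^ γ)
      (hsum.mul_left _) hsingle
    filter_upwards [hdom, hTpos] with y hy hTy p
    rw [Real.norm_of_nonneg (div_nonneg ENNReal.toReal_nonneg hTy.le)]
    exact hy p
  -- upper bound: union bound
  have hsummy : ∀ y : ℝ, (∀ p : ℤ × Fin d,
        (μ {ω | y < a p * W p ω}).toReal / T y ≤ C0 * a p ^ γ) → 0 < T y →
      Summable (fun p : ℤ × Fin d => (μ {ω | y < a p * W p ω}).toReal) := by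
    intro y hy hTy
    apply Summable.of_nonneg_of_le (fun p => ENNReal.toReal_nonneg)
      (fun p => ?_) ((hsum.mul_left C0).mul_right (T y))
    have := hy p
    rw [div_le_iff₀ hTy] at this
    exact this
  have hupper : ∀ᶠ y in atTop,
      (μ {ω | y < ⨆ p : ℤ × Fin d, a p * W p ω}).toReal / T y
        ≤ ∑' p : ℤ × Fin d, (μ {ω | y < a p * W p ω}).toReal / T y := by
    filter_upwards [hdom, hTpos, eventually_gt_atTop 0] with y hy hTy hy0'
    have hsub : {ω | y < ⨆ p : ℤ × Fin d, a p * W p ω}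
        ⊆ ⋃ p : ℤ × Fin d, {ω | y < a p * W p ω} := by
      intro ω hω
      by_contra hc
      simp only [Set.mem_iUnion, Set.mem_setOf_eq, not_exists, not_lt] at hc
      exact absurd (Real.iSup_le hc hy0'.le) (not_le.2 hω)
    have hsumm := hsummy y hy hTy
    have hμeq : ∀ p : ℤ × Fin d, μ {ω | y < a p * W p ω}
        = ENNReal.ofReal ((μ {ω | y < a p * W p ω}).toReal) :=
      fun p => (ENNReal.ofReal_toReal (measure_ne_top _ _)).symm
    have hchain : μ {ω | y < ⨆ p : ℤ × Fin d, a p * W p ω}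
        ≤ ENNReal.ofReal (∑' p : ℤ × Fin d, (μ {ω | y < a p * W p ω}).toReal) := by
      calc μ {ω | y < ⨆ p : ℤ × Fin d, a p * W p ω}
          ≤ μ (⋃ p : ℤ × Fin d, {ω | y < a p * W p ω}) := measure_mono hsub
        _ ≤ ∑' p : ℤ × Fin d, μ {ω | y < a p * W p ω} := measure_iUnion_le _
        _ = ∑' p : ℤ × Fin d, ENNReal.ofReal ((μ {ω | y < a p * W p ω}).toReal) := by
            exact tsum_congr hμeq
        _ = ENNReal.ofReal (∑' p : ℤ × Fin d, (μ {ω | y < a p * W p ω}).toReal) :=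
            (ENNReal.ofReal_tsum_of_nonneg (fun p => ENNReal.toReal_nonneg) hsumm).symm
    have h1 : (μ {ω | y < ⨆ p : ℤ × Fin d, a p * W p ω}).toReal
        ≤ ∑' p : ℤ × Fin d, (μ {ω | y < a p * W p ω}).toReal := by
      have := ENNReal.toReal_mono ENNReal.ofReal_ne_top hchain
      rwa [ENNReal.toReal_ofReal (tsum_nonneg (fun p => ENNReal.toReal_nonneg))] at this
    rw [tsum_div_const]
    exact (div_le_div_iff_of_pos_right hTy).2 h1
  -- the exceptional null set
  set N : Set Ω := {ω | ¬ BddAbove (Set.range fun p : ℤ × Fin d => a p * W p ω)} with hNdef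
  have hNsub : N ⊆ {ω | {p : ℤ × Fin d | 1 < a p * W p ω}.Infinite} := by
    intro ω hω
    simp only [hNdef, Set.mem_setOf_eq] at hω ⊢
    by_contra hfin
    rw [Set.not_infinite] at hfin
    apply hω
    refine ⟨1 + ∑ q ∈ hfin.toFinset, a q * W q ω, ?_⟩
    rintro x ⟨p, rfl⟩
    by_cases hp : p ∈ hfin.toFinset
    · have h1 : a p * W p ω ≤ ∑ q ∈ hfin.toFinset, a q * W q ω :=
        Finset.single_le_sum (fun q _ => mul_nonneg (ha q) (hWpos q ω)) hp
      simp only; linarith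
    · have h1 : a p * W p ω ≤ 1 := by
        simp only [Set.Finite.mem_toFinset, Set.mem_setOf_eq, not_lt] at hp; exact hp
      have h2 : 0 ≤ ∑ q ∈ hfin.toFinset, a q * W q ω :=
        Finset.sum_nonneg (fun q _ => mul_nonneg (ha q) (hWpos q ω))
      simp only; linarith
  have hbadfin : {p : ℤ × Fin d | y0⁻¹ < a p}.Finite := by
    have h2 : {p : ℤ × Fin d | ¬ a p ^ γ < (y0⁻¹)^γ}.Finite := by
      have h3 := hsum.tendsto_cofinite_zero.eventually
        (gt_mem_nhds (Real.rpow_pos_of_pos (inv_pos.2 hy0pos) γ))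
      exact Filter.eventually_cofinite.mp h3
    apply h2.subset
    intro p hp
    simp only [Set.mem_setOf_eq, not_lt] at hp ⊢
    exact (Real.rpow_lt_rpow (by positivity) hp hγ).le
  have hm1 : ∀ p : ℤ × Fin d, (μ {ω | 1 < a p * W p ω}).toReal
      ≤ 2^γ * y0^γ * T y0 * a p ^ γ + (if p ∈ hbadfin.toFinset then (1:ℝ) else 0) := by
    intro p
    have hTy0nn : 0 ≤ T y0 := hTnn y0 hy0pos
    have hterm : 0 ≤ 2^γ * y0^γ * T y0 * a p ^ γ :=
      mul_nonneg (mul_nonneg (mul_nonneg (Real.rpow_nonneg (by norm_num) γ)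
        (Real.rpow_nonneg hy0pos.le γ)) hTy0nn) (Real.rpow_nonneg (ha p) γ)
    by_cases hbad : p ∈ hbadfin.toFinset
    · rw [if_pos hbad]
      have h1 : (μ {ω | 1 < a p * W p ω}).toReal ≤ 1 := by
        have := ENNReal.toReal_mono (by simp) (prob_le_one (μ := μ) (s := {ω | 1 < a p * W p ω}))
        simpa using this
      linarith
    · rw [if_neg hbad, add_zero]
      have hple : a p ≤ y0⁻¹ := by
        simp only [Set.Finite.mem_toFinset, Set.mem_setOf_eq, not_lt] at hbad; exact hbad
      rcases eq_or_lt_of_le (ha p) with hp | hp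
      · rw [htp0 p hp.symm 1 one_pos]; exact hterm
      · rw [htp p hp 1 one_pos, mul_one]
        have hay0 : 0 < a p * y0 := mul_pos hp hy0pos
        have hl1 : 1 ≤ ((a p) * y0)⁻¹ := by
          rw [one_le_inv_iff₀]
          refine ⟨hay0, ?_⟩
          calc a p * y0 ≤ y0⁻¹ * y0 := by nlinarith
            _ = 1 := inv_mul_cancel₀ (ne_of_gt hy0pos)
        have hpot := hy0 y0 le_rfl ((a p * y0)⁻¹) hl1
        have heq : (a p * y0)⁻¹ * y0 = (a p)⁻¹ := by field_simp
        rw [heq, hinvpow _ hay0.le γ, Real.mul_rpow (ha p) hy0pos.le] at hpot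
        calc T (a p)⁻¹ ≤ 2^γ * (a p ^ γ * y0^γ) * T y0 := hpot
          _ = 2^γ * y0^γ * T y0 * a p ^ γ := by ring
  have hmsum : Summable (fun p : ℤ × Fin d => (μ {ω | 1 < a p * W p ω}).toReal) := by
    apply Summable.of_nonneg_of_le (fun p => ENNReal.toReal_nonneg) hm1
    exact (hsum.mul_left _).add
      (summable_of_ne_finset_zero (s := hbadfin.toFinset) (fun p hp => if_neg hp))
  have hNnull : μ N = 0 := by
    haveI : Nonempty (Fin d) := ⟨⟨0, hd⟩⟩
    haveI : Infinite (ℤ × Fin d) := by infer_instance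
    haveI : Denumerable (ℤ × Fin d) := Denumerable.ofEncodableOfInfinite _
    set e : ℕ ≃ ℤ × Fin d := (Denumerable.eqv (ℤ × Fin d)).symm with hedef
    apply measure_mono_null hNsub
    have hsub2 : {ω | {p : ℤ × Fin d | 1 < a p * W p ω}.Infinite}
        ⊆ {ω | ∃ᶠ n in atTop, ω ∈ {ω' | 1 < a (e n) * W (e n) ω'}} := by
      intro ω hω
      simp only [Set.mem_setOf_eq] at hω ⊢
      rw [Nat.frequently_atTop_iff_infinite]
      have heq2 : {n : ℕ | 1 < a (e n) * W (e n) ω} = e ⁻¹' {p | 1 < a p * W p ω} := rfl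
      rw [heq2]
      exact hω.preimage (fun x _ => e.surjective x)
    apply measure_mono_null hsub2
    apply measure_setOf_frequently_eq_zero
    have he : ∑' n : ℕ, μ {ω | 1 < a (e n) * W (e n) ω}
        = ∑' p : ℤ × Fin d, μ {ω | 1 < a p * W p ω} :=
      e.tsum_eq (fun p => μ {ω | 1 < a p * W p ω})
    have he2 : (∑' n : ℕ, μ {ω' | 1 < a (e n) * W (e n) ω'})
        = ∑' p : ℤ × Fin d, μ {ω | 1 < a p * W p ω} := he
    simp only [Set.setOf_mem_eq]
    rw [he2]
    have hofr : ∑' p : ℤ × Fin d, μ {ω | 1 < a p * W p ω}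
        = ENNReal.ofReal (∑' p : ℤ × Fin d, (μ {ω | 1 < a p * W p ω}).toReal) := by
      rw [ENNReal.ofReal_tsum_of_nonneg (fun p => ENNReal.toReal_nonneg) hmsum]
      exact tsum_congr (fun p => (ENNReal.ofReal_toReal (measure_ne_top _ _)).symm)
    rw [hofr]; exact ENNReal.ofReal_ne_top
  -- lower bound for finite sets of indices
  have hlow : ∀ F : Finset (ℤ × Fin d), (∀ p ∈ F, 0 < a p) →
      ∀ᶠ y in atTop,
        (∑ p ∈ F, (μ {ω | y < a p * W p ω}).toReal) / T y
          - (∑ i ∈ F, ∑ j ∈ F, (if i = j then (0:ℝ) else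
              (μ {ω | y < a i * W i ω ∧ y < a j * W j ω}).toReal)) / T y
          ≤ (μ {ω | y < ⨆ p : ℤ × Fin d, a p * W p ω}).toReal / T y := by
    intro F hF
    filter_upwards [hTpos, eventually_gt_atTop 0] with y hTy hy0'
    set A : (ℤ × Fin d) → Set Ω := fun p => {ω | y < a p * W p ω} with hAdef
    have hAmeas : ∀ p, MeasurableSet (A p) :=
      fun p => measurableSet_lt measurable_const ((hWmeas p).const_mul (a p))
    have hb := bonf μ A hAmeas F
    have hsub2 : (⋃ p ∈ F, A p) ⊆ {ω | y < ⨆ p : ℤ × Fin d, a p * W p ω} ∪ N := by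
      intro ω hω
      simp only [Set.mem_iUnion] at hω
      obtain ⟨p, hpF, hp⟩ := hω
      by_cases hbdd : BddAbove (Set.range fun q : ℤ × Fin d => a q * W q ω)
      · left
        exact lt_of_lt_of_le hp (le_ciSup hbdd p)
      · right; exact hbdd
    have hμle : (μ (⋃ p ∈ F, A p)).toReal
        ≤ (μ {ω | y < ⨆ p : ℤ × Fin d, a p * W p ω}).toReal := by
      apply ENNReal.toReal_mono (measure_ne_top _ _)
      calc μ (⋃ p ∈ F, A p) ≤ μ ({ω | y < ⨆ p : ℤ × Fin d, a p * W p ω} ∪ N) :=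
            measure_mono hsub2
        _ ≤ μ {ω | y < ⨆ p : ℤ × Fin d, a p * W p ω} + μ N := measure_union_le _ _
        _ = μ {ω | y < ⨆ p : ℤ × Fin d, a p * W p ω} := by rw [hNnull, add_zero]
    have hAint : ∀ i j : ℤ × Fin d,
        A i ∩ A j = {ω | y < a i * W i ω ∧ y < a j * W j ω} := by
      intro i j; rw [hAdef]; ext ω; simp [Set.mem_setOf_eq]
    simp only [hAint] at hb
    rw [div_sub_div_same]
    exact (div_le_div_iff_of_pos_right hTy).2 (by linarith)
  -- conclusion
  have hgoal : Tendsto (fun y : ℝ =>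
      (μ {ω | y < ⨆ p : ℤ × Fin d, a p * W p ω}).toReal / T y) atTop
      (nhds (∑' p : ℤ × Fin d, a p ^ α)) := by
    rw [tendsto_order]
    constructor
    · intro b hb
      obtain ⟨F0, hF0⟩ := (hsumα.hasSum.eventually (lt_mem_nhds hb)).exists
      set F : Finset (ℤ × Fin d) := F0.filter (fun p => 0 < a p) with hFdef
      have hFmem : ∀ p ∈ F, 0 < a p := fun p hp => (Finset.mem_filter.1 hp).2
      have hFsum : ∑ p ∈ F, a p ^ α = ∑ p ∈ F0, a p ^ α := by
        apply Finset.sum_filter_of_ne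
        intro p hp hne
        rcases eq_or_lt_of_le (ha p) with h0 | h0
        · exfalso; apply hne; rw [← h0, Real.zero_rpow (ne_of_gt hα)]
        · exact h0
      have hDlim : Tendsto (fun y : ℝ => ∑ i ∈ F, ∑ j ∈ F,
          ((if i = j then (0:ℝ) else
            (μ {ω | y < a i * W i ω ∧ y < a j * W j ω}).toReal) / T y))
          atTop (nhds 0) := by
        have h1 : Tendsto (fun y : ℝ => ∑ i ∈ F, ∑ j ∈ F,
            ((if i = j then (0:ℝ) else
              (μ {ω | y < a i * W i ω ∧ y < a j * W j ω}).toReal) / T y))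
            atTop (nhds (∑ i ∈ F, ∑ j ∈ F, (0:ℝ))) := by
          apply tendsto_finset_sum
          intro i hi
          apply tendsto_finset_sum
          intro j hj
          by_cases hij : i = j
          · simp only [if_pos hij, zero_div]
            exact tendsto_const_nhds
          · simp only [if_neg hij]
            exact hext i j hij (a i) (a j) (hFmem i hi) (hFmem j hj)
        simpa using h1
      have hSlim : Tendsto (fun y : ℝ => ∑ p ∈ F,
          ((μ {ω | y < a p * W p ω}).toReal / T y)) atTop (nhds (∑ p ∈ F, a p ^ α)) :=
        tendsto_finset_sum _ (fun p _ => hsingle p)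
      have hLlim : Tendsto (fun y : ℝ =>
          (∑ p ∈ F, (μ {ω | y < a p * W p ω}).toReal) / T y
            - (∑ i ∈ F, ∑ j ∈ F, (if i = j then (0:ℝ) else
                (μ {ω | y < a i * W i ω ∧ y < a j * W j ω}).toReal)) / T y)
          atTop (nhds (∑ p ∈ F, a p ^ α)) := by
        have h2 := hSlim.sub hDlim
        rw [sub_zero] at h2
        exact h2.congr (fun y => by simp only [Finset.sum_div])
      have hblt : b < ∑ p ∈ F, a p ^ α := by rw [hFsum]; exact hF0
      have hev2 := hLlim.eventually (lt_mem_nhds hblt)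
      filter_upwards [hev2, hlow F hFmem] with y h1 h2
      exact lt_of_lt_of_le h1 h2
    · intro b hb
      have hev2 := hupperlim.eventually (gt_mem_nhds hb)
      filter_upwards [hupper, hev2] with y h1 h2
      exact lt_of_le_of_lt h1 h2
  exact hgoal
end

section
/- Let γ: ℕ → [0,1) satisfy γ(n) = o(1/log n) and sup_n γ(n) =: β/(2−β) with β := sup_{k≥1} 2γ(k)/(1+γ(k)) < 1. Fix C > 0 and for each n ≥ 2 define f*_n(x) = exp( 2 log(n) γ(⌈xn⌉) / (1 + γ(⌈xn⌉)) ) for x > 0. Then for any fixed k ≥ 1, ∫_0^{1/k} f*_n(x) dx → 1/k as n → ∞. -/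
/-!
Write `c m = 2γ(m)/(1+γ(m))`, so the integrand is `exp (c ⌈xn⌉ · log n)`. Since
`xn ≤ ⌈xn⌉`, we have `c ⌈xn⌉ · log n ≤ c ⌈xn⌉ · log ⌈xn⌉ + c ⌈xn⌉ · (-log x)`. The hypothesis
`γ = o(1/log)` makes the first term tend to `0`, hence bounded by some `D`, and the second tends
to `0` for fixed `x > 0`, so the integrand tends to `1` pointwise. On the other hand `c ≤ β`, so
the integrand is dominated by `e^D x^{-β}`, which is integrable near `0` because `β < 1`; dominated
convergence concludes.
-/

open Filter Asymptotics MeasureTheory Topology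

lemma log_le_log_natCeil_mul_sub_log {x y : ℝ} (hx : 0 < x) (hy : 0 < y) :
    Real.log y ≤ Real.log ⌈x * y⌉₊ - Real.log x := by
  have h := Real.log_le_log (by positivity) (Nat.le_ceil (x * y))
  rw [Real.log_mul hx.ne' hy.ne'] at h
  linarith

lemma tendsto_natCeil_mul_atTop {x : ℝ} (hx : 0 < x) :
    Tendsto (fun n : ℕ => ⌈x * n⌉₊) atTop atTop :=
  tendsto_nat_ceil_atTop.comp (tendsto_natCast_atTop_atTop.const_mul_atTop hx)

namespace Asymptotics.IsLittleO

variable {c : ℕ → ℝ}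

lemma tendsto_mul_log_nhds_zero (hc : c =o[atTop] fun m : ℕ => 1 / Real.log m) :
    Tendsto (fun m : ℕ => c m * Real.log m) atTop (𝓝 0) := by
  refine hc.tendsto_div_nhds_zero.congr' ?_
  filter_upwards [eventually_ge_atTop 2] with m hm
  have : 0 < Real.log m := Real.log_pos (by exact_mod_cast hm)
  field_simp

lemma tendsto_nhds_zero_of_one_div_log (hc : c =o[atTop] fun m : ℕ => 1 / Real.log m) :
    Tendsto c atTop (𝓝 0) := by
  refine hc.trans_tendsto ?_
  simp only [one_div]
  exact (Real.tendsto_log_atTop.comp tendsto_natCast_atTop_atTop).inv_tendsto_atTop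

lemma tendsto_natCeil_mul_mul_log_nhds_zero (hc : c =o[atTop] fun m : ℕ => 1 / Real.log m)
    (hc0 : ∀ m, 0 ≤ c m) {x : ℝ} (hx : 0 < x) :
    Tendsto (fun n : ℕ => c ⌈x * n⌉₊ * Real.log n) atTop (𝓝 0) := by
  have hceil := tendsto_natCeil_mul_atTop hx
  have hupper : Tendsto (fun n : ℕ => c ⌈x * n⌉₊ * Real.log ⌈x * n⌉₊ +
      c ⌈x * n⌉₊ * -Real.log x) atTop (𝓝 0) := by
    simpa using (hc.tendsto_mul_log_nhds_zero.comp hceil).add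
      ((hc.tendsto_nhds_zero_of_one_div_log.comp hceil).mul_const (-Real.log x))
  refine squeeze_zero' (Eventually.of_forall fun n =>
    mul_nonneg (hc0 _) (Real.log_natCast_nonneg n)) ?_ hupper
  filter_upwards [eventually_gt_atTop 0] with n hn
  have := log_le_log_natCeil_mul_sub_log hx (Nat.cast_pos.mpr hn)
  nlinarith [hc0 ⌈x * n⌉₊]

end Asymptotics.IsLittleO

lemma natCeil_mul_mul_log_le {c : ℕ → ℝ} {β D : ℝ} (hc0 : ∀ m, 0 ≤ c m)
    (hcβ : ∀ m, 1 ≤ m → c m ≤ β) (hD : ∀ m, c m * Real.log m ≤ D) {n : ℕ} (hn : 0 < n)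
    {x : ℝ} (hx : x ∈ Set.Ioc 0 1) : c ⌈x * n⌉₊ * Real.log n ≤ D + β * -Real.log x := by
  have hn' : (0 : ℝ) < n := Nat.cast_pos.mpr hn
  have hm : 1 ≤ ⌈x * n⌉₊ := Nat.ceil_pos.mpr (mul_pos hx.1 hn')
  have hlogx : 0 ≤ -Real.log x := neg_nonneg.mpr (Real.log_nonpos hx.1.le hx.2)
  calc c ⌈x * n⌉₊ * Real.log n
      ≤ c ⌈x * n⌉₊ * (Real.log ⌈x * n⌉₊ - Real.log x) :=
        mul_le_mul_of_nonneg_left (log_le_log_natCeil_mul_sub_log hx.1 hn') (hc0 _)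
    _ = c ⌈x * n⌉₊ * Real.log ⌈x * n⌉₊ + c ⌈x * n⌉₊ * -Real.log x := by ring
    _ ≤ D + β * -Real.log x := add_le_add (hD _) (mul_le_mul_of_nonneg_right (hcβ _ hm) hlogx)

theorem tendsto_setIntegral_exp_natCeil_mul_mul_log {c : ℕ → ℝ} {β b : ℝ} (hc0 : ∀ m, 0 ≤ c m)
    (hcβ : ∀ m, 1 ≤ m → c m ≤ β) (hβ : β < 1) (hc : c =o[atTop] fun m : ℕ => 1 / Real.log m)
    (hb0 : 0 ≤ b) (hb1 : b ≤ 1) :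
    Tendsto (fun n : ℕ => ∫ x in Set.Ioc 0 b, Real.exp (c ⌈x * n⌉₊ * Real.log n))
      atTop (𝓝 b) := by
  obtain ⟨D, hD⟩ := hc.tendsto_mul_log_nhds_zero.bddAbove_range
  have hD' : ∀ m, c m * Real.log m ≤ D := fun m => hD ⟨m, rfl⟩
  have hmeas : ∀ n : ℕ, AEStronglyMeasurable
      (fun x : ℝ => Real.exp (c ⌈x * n⌉₊ * Real.log n)) (volume.restrict (Set.Ioc 0 b)) :=
    fun n => (((measurable_from_top.comp (Nat.measurable_ceil.comp
      (measurable_id.mul_const _))).mul_const _).exp).aestronglyMeasurable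
  have hbound : ∀ᶠ n : ℕ in atTop, ∀ᵐ (x : ℝ) ∂(volume.restrict (Set.Ioc 0 b)),
      ‖Real.exp (c ⌈x * n⌉₊ * Real.log n)‖ ≤ Real.exp D * x ^ (-β) := by
    filter_upwards [eventually_gt_atTop 0] with n hn
    filter_upwards [ae_restrict_mem measurableSet_Ioc] with x hx
    rw [Real.norm_eq_abs, abs_of_pos (Real.exp_pos _), Real.rpow_def_of_pos hx.1,
      ← Real.exp_add, Real.exp_le_exp]
    linarith [natCeil_mul_mul_log_le hc0 hcβ hD' hn ⟨hx.1, hx.2.trans hb1⟩]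
  have hint : Integrable (fun x : ℝ => Real.exp D * x ^ (-β)) (volume.restrict (Set.Ioc 0 b)) :=
    ((intervalIntegrable_iff_integrableOn_Ioc_of_le hb0).mp
      (intervalIntegral.intervalIntegrable_rpow' (by linarith))).const_mul _
  have hlim : ∀ᵐ (x : ℝ) ∂(volume.restrict (Set.Ioc 0 b)),
      Tendsto (fun n : ℕ => Real.exp (c ⌈x * n⌉₊ * Real.log n)) atTop (𝓝 1) := by
    filter_upwards [ae_restrict_mem measurableSet_Ioc] with x hx
    simpa using (hc.tendsto_natCeil_mul_mul_log_nhds_zero hc0 hx.1).rexp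
  have h := tendsto_integral_filter_of_dominated_convergence _
    (Eventually.of_forall hmeas) hbound hint hlim
  rwa [setIntegral_const, measureReal_def, Real.volume_Ioc, smul_eq_mul, mul_one, sub_zero,
    ENNReal.toReal_ofReal hb0] at h

theorem stmt_18 (γ : ℕ → ℝ) (hγrange : ∀ n, γ n ∈ Set.Ico (0 : ℝ) 1)
    (hγ : (fun n : ℕ => γ n) =o[atTop] fun n : ℕ => 1 / Real.log n)
    (hβ : (⨆ k : ℕ, 2 * γ (k + 1) / (1 + γ (k + 1))) < 1) :
    ∀ k : ℕ, 1 ≤ k →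
      Tendsto (fun n : ℕ =>
          ∫ x in Set.Ioc (0 : ℝ) (1 / (k : ℝ)),
            Real.exp (2 * Real.log n * γ ⌈x * n⌉₊ / (1 + γ ⌈x * n⌉₊)))
        atTop (nhds (1 / (k : ℝ))) := by
  intro k hk
  set c : ℕ → ℝ := fun m => 2 * γ m / (1 + γ m)
  have hγ0 : ∀ m, 0 ≤ γ m := fun m => (hγrange m).1
  have hc0 : ∀ m, 0 ≤ c m := fun m => by have := hγ0 m; positivity
  have hcγ : ∀ m, c m ≤ 2 * γ m := fun m =>
    div_le_self (by linarith [hγ0 m]) (le_add_of_nonneg_right (hγ0 m))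
  have hcβ : ∀ m, 1 ≤ m → c m ≤ ⨆ k : ℕ, c (k + 1) := by
    intro m hm
    obtain ⟨j, rfl⟩ := Nat.exists_eq_add_of_le' hm
    refine le_ciSup (f := fun k => c (k + 1)) ⟨2, ?_⟩ j
    rintro _ ⟨i, rfl⟩
    linarith [hcγ (i + 1), (hγrange (i + 1)).2]
  have hc : c =o[atTop] fun m : ℕ => 1 / Real.log m :=
    (IsBigO.of_bound 2 (Eventually.of_forall fun m => by
      simpa [abs_of_nonneg (hc0 m), abs_of_nonneg (hγ0 m)] using hcγ m)).trans_isLittleO hγ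
  have hk' : (1 : ℝ) ≤ k := by exact_mod_cast hk
  convert tendsto_setIntegral_exp_natCeil_mul_mul_log hc0 hcβ hβ hc (by positivity)
    ((div_le_one (by linarith)).mpr hk') using 5 with n x
  simp only [c]
  ring
end
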